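/- Top-term expansion of σ: σ_{(n-1)(j-i)}^{(r-j+i+n-1)}(x_i,...,x_j) = x_j^{(r)} P_{n-2}^{(r-j+i+n-1)}(x_i,...,x_j) + σ_{(n-1)(j-i-1)}^{(r-j+i)}(x_i,...,x_{j-1}) Π_{t=1}^{n-1} x_i^{(r-j+i+t)}, with upper indices mod n. -/

import Mathlib

open Finset

noncomputable section BirationalR

/-- A vector of reals with cyclically indexed coordinates (upper index mod `n`). -/
abbrev Vec (n : ℕ) := ZMod n → ℝ

/-- `κ_r(a,b) = Σ_{j=r}^{r+n-1} (Π_{k=r+1}^{j} b_k)(Π_{k=j+1}^{r+n-1} a_k)`, indices mod `n`. -/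
def kappaF (n : ℕ) (r : ZMod n) (a b : Vec n) : ℝ :=
  ∑ d ∈ Finset.range n,
    (∏ t ∈ Finset.range d, b (r + 1 + (t : ℕ))) *
      ∏ t ∈ Finset.range (n - 1 - d), a (r + 1 + (d : ℕ) + (t : ℕ))

/-- First component `b'` of the birational R-matrix `η(a,b) = (b',a')`:
`b'_i = b_{i+1} κ_{i+1}(a,b)/κ_i(a,b)`. -/
def etaB (n : ℕ) (a b : Vec n) : Vec n :=
  fun i => b (i + 1) * kappaF n (i + 1) a b / kappaF n i a b

/-- Second component `a'` of `η(a,b) = (b',a')`: `a'_i = a_{i-1} κ_{i-1}(a,b)/κ_i(a,b)`. -/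
def etaA (n : ℕ) (a b : Vec n) : Vec n :=
  fun i => a (i - 1) * kappaF n (i - 1) a b / kappaF n i a b

/-- `η` applied to positions `(p, p+1)` of a tuple of vectors. -/
def etaAt (n : ℕ) (p : ℕ) (X : ℕ → Vec n) : ℕ → Vec n :=
  fun q => if q = p then etaB n (X p) (X (p + 1))
    else if q = p + 1 then etaA n (X p) (X (p + 1)) else X q

/-- Action of the word `s_{w₁} s_{w₂} ⋯ s_{wₗ}` (rightmost acts first). -/
def applyWord (n : ℕ) (w : List ℕ) (X : ℕ → Vec n) : ℕ → Vec n :=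
  w.foldr (etaAt n) X

/-- The tuple `(x_i, x_{i+1}, …, x_j)` as a list. -/
def seg {n : ℕ} (x : ℕ → Vec n) (i j : ℕ) : List (Vec n) :=
  (List.range (j + 1 - i)).map fun t => x (i + t)

/-- `τ_k^{(r)}(x_1,…,x_m)`: sum over weakly increasing `i_1 ≤ … ≤ i_k`, no index used
more than `n-1` times, of `x_{i_1}^{(r)} x_{i_2}^{(r-1)} ⋯ x_{i_k}^{(r-k+1)}`.
Encoded via multiplicity functions; `τ = 0` for negative `k`. -/
def tauF (n : ℕ) (r : ZMod n) (k : ℤ) (x : List (Vec n)) : ℝ :=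
  if 0 ≤ k then
    ∑ c ∈ (Fintype.piFinset fun _ : Fin x.length => Finset.range n).filter
        (fun c => ∑ i, c i = k.toNat),
      ∏ i : Fin x.length, ∏ β ∈ Finset.range (c i),
        x.get i (r - (∑ i' ∈ Finset.univ.filter (fun i' => i' < i), c i' : ℕ) - (β : ℕ))
  else 0

/-- `σ_k^{(r)}(x_1,…,x_m) = Σ_{t=0}^{k} x_1^{(r)} ⋯ x_1^{(r-t+1)} τ_{k-t}^{(r-t)}(x_2,…,x_m)`. -/
def sigmaF (n : ℕ) (r : ZMod n) (k : ℕ) : List (Vec n) → ℝ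
  | [] => if k = 0 then 1 else 0
  | y :: rest =>
      ∑ t ∈ Finset.range (k + 1),
        (∏ β ∈ Finset.range t, y (r - (β : ℕ))) * tauF n (r - (t : ℕ)) ((k : ℤ) - (t : ℤ)) rest

/-- `σ̄_k^{(r)}(x_1,…,x_m) = Σ_{t=0}^{k} τ_{k-t}^{(r)}(x_1,…,x_{m-1}) x_m^{(r-k+t)} ⋯ x_m^{(r-k+1)}`. -/
def sigmaBarF (n : ℕ) (r : ZMod n) (k : ℕ) : List (Vec n) → ℝ
  | [] => if k = 0 then 1 else 0
  | y :: rest =>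
      ∑ t ∈ Finset.range (k + 1),
        tauF n r ((k : ℤ) - (t : ℤ)) ((y :: rest).dropLast) *
          ∏ β ∈ Finset.range t,
            (y :: rest).getLast (List.cons_ne_nil y rest) (r - (k : ℕ) + 1 + (β : ℕ))

/-- `Ω_k^{(r)}(x_i,…,x_j) = Σ_{ℓ=0}^{n-1} σ^{(r)}_{(n-1)(k-i)+ℓ}(x_i,…,x_k)
σ̄^{(r+k-i-ℓ)}_{(n-1)(j-k)-ℓ}(x_{k+1},…,x_j)`. -/
def OmegaF (n : ℕ) (r : ZMod n) (k i j : ℕ) (x : ℕ → Vec n) : ℝ :=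
  ∑ ℓ ∈ Finset.range n,
    sigmaF n r ((n - 1) * (k - i) + ℓ) (seg x i k) *
      sigmaBarF n (r + (k : ℕ) - (i : ℕ) - (ℓ : ℕ)) ((n - 1) * (j - k) - ℓ) (seg x (k + 1) j)

/-- `P_k^{(r)}(x_i,…,x_j) = Σ_{t=0}^{k} (Π_{s=0}^{t-1} x_i^{(r-s)})
σ_{(n-1)(j-i-1)}^{(r-t)}(x_i,…,x_{j-1}) (Π_{s=0}^{k-t-1} x_j^{(r-t+j-i-1-s)})`. -/
def PF (n : ℕ) (r : ZMod n) (k i j : ℕ) (x : ℕ → Vec n) : ℝ :=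
  ∑ t ∈ Finset.range (k + 1),
    (∏ s ∈ Finset.range t, x i (r - (s : ℕ))) *
      sigmaF n (r - (t : ℕ)) ((n - 1) * (j - i - 1)) (seg x i (j - 1)) *
      ∏ s ∈ Finset.range (k - t), x j (r - (t : ℕ) + (j : ℕ) - (i : ℕ) - 1 - (s : ℕ))

end BirationalR

/-!
Write `(x_i, …, x_j) = x_i :: M ++ [x_j]` and expand `τ(M ++ [x_j])` by the multiplicity `c < n`
of `x_j`. The middle block `M` absorbs at most `(n-1)(j-i-1)` of the degree `(n-1)(j-i)`, so
`x_i` carries at least `n-1-c` factors; pulling these out leaves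
`σ_{(n-1)(j-i-1)}(x_i, …, x_{j-1})`. The term `c = 0` is the second summand and the terms
`c ≥ 1` assemble to `x_j^{(r)} P_{n-2}`. The upper indices of the `x_j` factors start at `r`
because `(n-1)(j-i) ≡ i - j (mod n)`.
-/

/-- `τ` of a tuple `v : Fin m → Vec n`; unlike `tauF` it compares the degree `K` in `ℤ`, so that
negative degrees need no separate case. -/
def tauFin (n : ℕ) (ρ : ZMod n) (K : ℤ) (m : ℕ) (v : Fin m → Vec n) : ℝ :=
  ∑ c ∈ (Fintype.piFinset fun _ : Fin m => range n).filter (fun c => ((∑ i, c i : ℕ) : ℤ) = K),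
    ∏ i, ∏ β ∈ range (c i), v i (ρ - (∑ i' ∈ univ.filter (· < i), c i' : ℕ) - (β : ℕ))

lemma tauF_eq_tauFin (n : ℕ) (ρ : ZMod n) (K : ℤ) (x : List (Vec n)) :
    tauF n ρ K x = tauFin n ρ K x.length x.get := by
  unfold tauF tauFin
  split_ifs with hK
  · congr 1
    exact filter_congr fun c _ => by omega
  · refine (sum_eq_zero fun c hc => ?_).symm
    simp only [mem_filter] at hc
    omega

lemma sum_filter_lt_succ {M : Type*} [AddCommMonoid M] {m : ℕ} (c : Fin (m + 1) → M) (i : Fin m) :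
    ∑ i' ∈ univ.filter (· < i.succ), c i' = c 0 + ∑ i' ∈ univ.filter (· < i), c i'.succ := by
  simp only [sum_filter, Fin.sum_univ_succ, Fin.succ_pos, if_true, Fin.succ_lt_succ_iff]

lemma tauFin_succ (n : ℕ) (ρ : ZMod n) (K : ℤ) (m : ℕ) (v : Fin (m + 1) → Vec n) :
    tauFin n ρ K (m + 1) v =
      ∑ c₀ ∈ range n, (∏ β ∈ range c₀, v 0 (ρ - (β : ℕ))) *
        tauFin n (ρ - (c₀ : ℕ)) (K - (c₀ : ℕ)) m (Fin.tail v) := by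
  simp_rw [tauFin, mul_sum]
  rw [sum_sigma']
  refine sum_bij' (fun c _ => ⟨c 0, Fin.tail c⟩) (fun p _ => Fin.cons p.1 p.2)
    (fun c hc => ?_) (fun p hp => ?_) (fun c _ => Fin.cons_self_tail c)
    (fun p _ => by simp) (fun c _ => ?_)
  · simp only [mem_filter, Fintype.mem_piFinset, Fin.forall_fin_succ, Fin.sum_univ_succ] at hc
    simp only [mem_sigma, mem_filter, Fintype.mem_piFinset]
    rw [Nat.cast_add] at hc
    exact ⟨hc.1.1, hc.1.2, by simp only [Fin.tail]; omega⟩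
  · simp only [mem_sigma, mem_filter, Fintype.mem_piFinset] at hp
    simp only [mem_filter, Fintype.mem_piFinset, Fin.forall_fin_succ, Fin.sum_univ_succ,
      Fin.cons_zero, Fin.cons_succ]
    exact ⟨⟨hp.1, hp.2.1⟩, by rw [Nat.cast_add]; omega⟩
  · rw [Fin.prod_univ_succ]
    congr 1
    · simp
    · refine prod_congr rfl fun i _ => prod_congr rfl fun β _ => ?_
      rw [sum_filter_lt_succ]
      simp only [Fin.tail]
      push_cast
      ring_nf

lemma tauF_of_neg (n : ℕ) (ρ : ZMod n) {K : ℤ} (hK : K < 0) (x : List (Vec n)) :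
    tauF n ρ K x = 0 :=
  if_neg hK.not_ge

lemma tauF_of_lt (n : ℕ) (ρ : ZMod n) {K : ℤ} (x : List (Vec n))
    (hK : (((n - 1) * x.length : ℕ) : ℤ) < K) : tauF n ρ K x = 0 := by
  rw [tauF_eq_tauFin]
  refine sum_eq_zero fun c hc => absurd (mem_filter.1 hc).2 ?_
  have hc := Fintype.mem_piFinset.1 (mem_filter.1 hc).1
  have : ∑ i, c i ≤ (n - 1) * x.length := by
    simpa [mul_comm] using
      sum_le_sum fun i (_ : i ∈ univ) => Nat.le_sub_one_of_lt (mem_range.1 (hc i))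
  omega

lemma tauF_nil (n : ℕ) (ρ : ZMod n) (K : ℤ) : tauF n ρ K [] = if K = 0 then 1 else 0 := by
  rw [tauF_eq_tauFin, tauFin]
  split_ifs <;> simp_all [eq_comm]

lemma tauF_cons (n : ℕ) (ρ : ZMod n) (K : ℤ) (y : Vec n) (ys : List (Vec n)) :
    tauF n ρ K (y :: ys) =
      ∑ c₀ ∈ range n,
        (∏ β ∈ range c₀, y (ρ - (β : ℕ))) * tauF n (ρ - (c₀ : ℕ)) (K - (c₀ : ℕ)) ys := by
  simp only [tauF_eq_tauFin]
  exact tauFin_succ n ρ K ys.length (y :: ys).get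

lemma prod_range_sub_eq_prod_range_add {R M : Type*} [CommRing R] [CommMonoid M] (f : R → M)
    (ρ : R) (m : ℕ) : ∏ β ∈ range m, f (ρ - β) = ∏ s ∈ range m, f (ρ - m + 1 + s) := by
  rw [← prod_range_reflect]
  refine prod_congr rfl fun β hβ => congr_arg f ?_
  have h : (((m - 1 - β : ℕ) + 1 + β : ℕ) : R) = m := by
    rw [show m - 1 - β + 1 + β = m by have := mem_range.1 hβ; omega]
  push_cast at h
  linear_combination -h

lemma tauF_append_singleton (n : ℕ) (ρ : ZMod n) (K : ℤ) (ys : List (Vec n)) (z : Vec n) :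
    tauF n ρ K (ys ++ [z]) =
      ∑ c ∈ range n, tauF n ρ (K - (c : ℕ)) ys * ∏ s ∈ range c, z (ρ - K + 1 + (s : ℕ)) := by
  induction ys generalizing ρ K with
  | nil =>
    rw [List.nil_append, tauF_cons]
    refine sum_congr rfl fun c _ => ?_
    rw [tauF_nil, tauF_nil]
    by_cases h : K = c
    · subst h
      rw [if_pos (sub_self _), mul_one, one_mul, prod_range_sub_eq_prod_range_add]
      push_cast
      rfl
    · rw [if_neg (sub_ne_zero.2 h), mul_zero, zero_mul]
  | cons y ys ih =>
    simp_rw [List.cons_append, tauF_cons, ih, mul_sum]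
    rw [sum_comm]
    refine sum_congr rfl fun c _ => ?_
    rw [sum_mul]
    refine sum_congr rfl fun c₀ _ => ?_
    push_cast
    ring_nf

lemma sigmaF_cons_eq_sum_range (n : ℕ) (ρ : ZMod n) {k N : ℕ} (hkN : k ≤ N) (y : Vec n)
    (ys : List (Vec n)) :
    sigmaF n ρ k (y :: ys) =
      ∑ t ∈ range (N + 1), (∏ β ∈ range t, y (ρ - (β : ℕ))) * tauF n (ρ - (t : ℕ)) (k - t) ys := by
  obtain ⟨d, rfl⟩ := Nat.exists_eq_add_of_le hkN
  rw [sigmaF, show k + d + 1 = k + 1 + d by omega, sum_range_add _ (k + 1) d, left_eq_add]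
  exact sum_eq_zero fun t _ => by rw [tauF_of_neg _ _ (by omega), mul_zero]

lemma sigmaF_cons_add (n : ℕ) (ρ : ZMod n) {k : ℕ} (a : ℕ) (y : Vec n) (ys : List (Vec n))
    (hk : (n - 1) * ys.length ≤ k) :
    sigmaF n ρ (k + a) (y :: ys) =
      (∏ β ∈ range a, y (ρ - (β : ℕ))) * sigmaF n (ρ - (a : ℕ)) k (y :: ys) := by
  rw [sigmaF, show k + a + 1 = a + (k + 1) by omega, sum_range_add, sigmaF, mul_sum]
  -- `ys` absorbs at most `(n - 1) * ys.length` of the degree, so `y` carries at least `a` factors.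
  have hlow : ∑ t ∈ range a, (∏ β ∈ range t, y (ρ - (β : ℕ))) *
      tauF n (ρ - (t : ℕ)) ((k + a : ℕ) - t) ys = 0 :=
    sum_eq_zero fun t ht => by
      rw [tauF_of_lt _ _ _ (by have := mem_range.1 ht; omega), mul_zero]
  rw [hlow, zero_add]
  refine sum_congr rfl fun t _ => ?_
  rw [prod_range_add, mul_assoc]
  push_cast
  ring_nf

lemma sigmaF_cons_append_singleton (n : ℕ) (ρ : ZMod n) {K : ℕ} (hK : n ≤ K + 1) (y z : Vec n)
    (ys : List (Vec n)) :
    sigmaF n ρ K (y :: (ys ++ [z])) =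
      ∑ c ∈ range n, sigmaF n ρ (K - c) (y :: ys) * ∏ s ∈ range c, z (ρ - K + 1 + (s : ℕ)) := by
  simp_rw [sigmaF, tauF_append_singleton, mul_sum]
  rw [sum_comm]
  refine sum_congr rfl fun c hc => ?_
  rw [← sigmaF, sigmaF_cons_eq_sum_range n ρ (Nat.sub_le K c), sum_mul]
  refine sum_congr rfl fun t _ => ?_
  have hcK : c ≤ K := by have := mem_range.1 hc; omega
  push_cast [hcK]
  ring_nf

lemma sigmaF_cons_append_singleton_top (n : ℕ) (ρ : ZMod n) (y z : Vec n) (ys : List (Vec n)) :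
    sigmaF n ρ ((n - 1) * ys.length + (n - 1)) (y :: (ys ++ [z])) =
      ∑ c ∈ range n, (∏ β ∈ range (n - 1 - c), y (ρ - (β : ℕ))) *
        sigmaF n (ρ - (n - 1 - c : ℕ)) ((n - 1) * ys.length) (y :: ys) *
          ∏ s ∈ range c, z (ρ - ((n - 1) * ys.length + (n - 1) : ℕ) + 1 + (s : ℕ)) := by
  rw [sigmaF_cons_append_singleton n ρ (by omega)]
  refine sum_congr rfl fun c hc => ?_
  rw [show (n - 1) * ys.length + (n - 1) - c = (n - 1) * ys.length + (n - 1 - c) by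
    have := mem_range.1 hc; omega, sigmaF_cons_add _ _ _ _ _ le_rfl]

lemma seg_length {n : ℕ} (x : ℕ → Vec n) (i j : ℕ) : (seg x i j).length = j + 1 - i := by
  simp [seg]

lemma seg_eq_cons {n : ℕ} (x : ℕ → Vec n) {i j : ℕ} (h : i ≤ j) :
    seg x i j = x i :: seg x (i + 1) j := by
  rw [seg, seg, show j + 1 - i = j + 1 - (i + 1) + 1 by omega, List.range_succ_eq_map,
    List.map_cons, List.map_map]
  congr 2
  funext t
  simp only [Function.comp, Nat.succ_eq_add_one, add_assoc, add_comm 1]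

lemma seg_succ_eq_append {n : ℕ} (x : ℕ → Vec n) {i j : ℕ} (h : i ≤ j + 1) :
    seg x i (j + 1) = seg x i j ++ [x (j + 1)] := by
  rw [seg, seg, show j + 1 + 1 - i = j + 1 - i + 1 by omega, List.range_succ, List.map_append]
  simp only [List.map_cons, List.map_nil]
  rw [show i + (j + 1 - i) = j + 1 by omega]

lemma PF_eq_sum_reflect (n : ℕ) (ρ : ZMod n) (k i j : ℕ) (x : ℕ → Vec n) :
    PF n ρ k i j x =
      ∑ c ∈ range (k + 1), (∏ β ∈ range (k - c), x i (ρ - (β : ℕ))) *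
        sigmaF n (ρ - (k - c : ℕ)) ((n - 1) * (j - i - 1)) (seg x i (j - 1)) *
          ∏ s ∈ range c, x j (ρ - (k : ℕ) + (j : ℕ) - (i : ℕ) + (s : ℕ)) := by
  rw [PF, ← sum_range_reflect]
  refine sum_congr rfl fun c hc => ?_
  replace hc : c ≤ k := Nat.lt_succ_iff.1 (mem_range.1 hc)
  rw [show k + 1 - 1 - c = k - c by omega, show k - (k - c) = c by omega,
    prod_range_sub_eq_prod_range_add (x j), Nat.cast_sub hc]
  ring_nf

theorem sigma_top_expansion_general (n : ℕ) (hn : 2 ≤ n) (x : ℕ → Vec n)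
    (i j : ℕ) (hij : i < j) (r : ZMod n) :
    sigmaF n (r - (j : ℕ) + (i : ℕ) + ((n : ℕ) - 1 : ℕ)) ((n - 1) * (j - i)) (seg x i j) =
      x j r * PF n (r - (j : ℕ) + (i : ℕ) + ((n : ℕ) - 1 : ℕ)) (n - 2) i j x +
        sigmaF n (r - (j : ℕ) + (i : ℕ)) ((n - 1) * (j - i - 1)) (seg x i (j - 1)) *
          ∏ t ∈ Finset.range (n - 1), x i (r - (j : ℕ) + (i : ℕ) + ((t : ℕ) + 1)) := by
  set mid := seg x (i + 1) (j - 1)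
  have hlen : mid.length = j - i - 1 := by rw [seg_length]; omega
  have hinit : seg x i (j - 1) = x i :: mid := seg_eq_cons x (by omega)
  have hseg : seg x i j = x i :: (mid ++ [x j]) := by
    rw [seg_eq_cons x hij.le, ← Nat.sub_add_cancel (by omega : 1 ≤ j),
      seg_succ_eq_append x (by omega), Nat.sub_add_cancel (by omega : 1 ≤ j)]
  have hdeg : (n - 1) * (j - i) = (n - 1) * mid.length + (n - 1) := by
    rw [hlen, ← Nat.mul_succ]; congr 1; omega
  have hlast : r - (j : ℕ) + (i : ℕ) + ((n - 1 : ℕ) : ZMod n) -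
      ((n - 1) * mid.length + (n - 1) : ℕ) + 1 = r := by
    rw [← hdeg, Nat.cast_mul, Nat.cast_sub (by omega : 1 ≤ n), Nat.cast_sub hij.le,
      ZMod.natCast_self]
    ring
  rw [hseg, hdeg, sigmaF_cons_append_singleton_top, hlast,
    show range n = range (n - 1 + 1) by rw [Nat.sub_add_cancel (by omega)], sum_range_succ',
    PF_eq_sum_reflect, hinit, hlen, show n - 2 + 1 = n - 1 by omega, mul_sum]
  congr 1
  · refine sum_congr rfl fun c _ => ?_
    have hsplit : ((n - 1 : ℕ) : ZMod n) = ((n - 2 : ℕ) : ZMod n) + 1 := by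
      rw [show n - 1 = n - 2 + 1 by omega, Nat.cast_succ]
    rw [show n - 1 - (c + 1) = n - 2 - c by omega, prod_range_succ', hsplit]
    push_cast
    ring_nf
  · rw [Nat.sub_zero, prod_range_zero, mul_one, prod_range_sub_eq_prod_range_add (x i), mul_comm]
    ring_nf

/-- top-term expansion of `σ`:
`σ_{(n-1)(j-i)}^{(r-j+i+n-1)} = x_j^{(r)} P_{n-2}^{(r-j+i+n-1)} +
σ_{(n-1)(j-i-1)}^{(r-j+i)}(x_i,…,x_{j-1}) Π_{t=1}^{n-1} x_i^{(r-j+i+t)}`. -/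
theorem sigma_top_expansion (n : ℕ) (hn : 2 ≤ n) (x : ℕ → Vec n)
    (hx : ∀ p r, 0 < x p r) (i j : ℕ) (hi : 1 ≤ i) (hij : i < j) (r : ZMod n) :
    sigmaF n (r - (j : ℕ) + (i : ℕ) + ((n : ℕ) - 1 : ℕ)) ((n - 1) * (j - i)) (seg x i j) =
      x j r * PF n (r - (j : ℕ) + (i : ℕ) + ((n : ℕ) - 1 : ℕ)) (n - 2) i j x +
        sigmaF n (r - (j : ℕ) + (i : ℕ)) ((n - 1) * (j - i - 1)) (seg x i (j - 1)) *
          ∏ t ∈ Finset.range (n - 1), x i (r - (j : ℕ) + (i : ℕ) + ((t : ℕ) + 1)) :=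
  sigma_top_expansion_general n hn x i j hij r
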